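/- arXiv:1701.04196 — 2 statements merged into one kernel-verified Lean document; each statement's English description precedes it below -/
import Mathlib

section
/- Suppose Y is Hausdorff, and let Q denote the quotient of (Z∞ × Y) × 𝕋 by the Williams relation, with ι : Y → Q, φ ↦ [((0, φ), 1)], and ĵ : R → Q, [(φ, z)] ↦ [((∞, φ), z)], where R is the quotient of Y × 𝕋 by the Williams relation for the σ-action on Y. Then every open subset S of Q can be written as S = ι(U) ∪ ĵ(W) where U is an open subset of Y, W is an open subset of R, and U is nonempty whenever W is nonempty. -/
open Filter Topology

/-- The order topology on `Z∞ = ℤ ∪ {∞}` (formally `WithTop ℤ`): every `n ∈ ℤ` is isolated,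
and the sets `J_n = {k : ℤ | n ≤ k} ∪ {∞}` form a neighborhood basis at `∞`. -/
noncomputable instance : TopologicalSpace (WithTop ℤ) := Preorder.topology (WithTop ℤ)

instance : OrderTopology (WithTop ℤ) := ⟨rfl⟩

/-- The integer power `σⁿ` (`n : ℤ`) of a homeomorphism `σ : Y ≃ₜ Y`, as a function. -/
def sigmaPow {Y : Type*} [TopologicalSpace Y] (σ : Y ≃ₜ Y) (n : ℤ) : Y → Y :=
  fun y => (σ.toEquiv ^ n) y

/-- The action of `ℤ` on `Z∞ × Y`: `n·(m, y) = (m + n, y)` for `m ∈ ℤ`, and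
`n·(∞, y) = (∞, σⁿ(y))`. -/
def actZ {Y : Type*} [TopologicalSpace Y] (σ : Y ≃ₜ Y) (n : ℤ) (p : WithTop ℤ × Y) :
    WithTop ℤ × Y :=
  (p.1.map (· + n), if p.1 = ⊤ then sigmaPow σ n p.2 else p.2)

/-- The Williams relation on `X × 𝕋` associated to an action `act` of `ℤ` on a topological
space `X`: `(x, z) ∼ (y, w)` iff the closures of the `ℤ`-orbits of `x` and `y` coincide and
`zⁿ = wⁿ` for all `n` in the stability group of `x`. -/
def williams {X : Type*} [TopologicalSpace X] (act : ℤ → X → X)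
    (p q : X × Circle) : Prop :=
  closure (Set.range fun n : ℤ => act n p.1) = closure (Set.range fun n : ℤ => act n q.1) ∧
  ∀ n : ℤ, act n p.1 = p.1 → p.2 ^ n = q.2 ^ n

/-- The map `ι : Y → Q` into the quotient `Q` of `(Z∞ × Y) × 𝕋` by the Williams relation,
sending `φ` to the class of `((0, φ), 1)`. -/
noncomputable def iotaQ {Y : Type*} [TopologicalSpace Y] (σ : Y ≃ₜ Y) :
    Y → Quot (williams (actZ σ)) :=
  fun φ => Quot.mk _ ((((0 : ℤ) : WithTop ℤ), φ), (1 : Circle))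

/-!
A point `(m, φ)` with `m` finite has orbit `{(k, φ) | k ∈ ℤ}` and trivial stabiliser, so all its
classes in `Q` equal `ι φ`; hence `Q = ι(Y) ∪ ĵ(R)` and `S = ι(ι⁻¹ S) ∪ ĵ(ĵ⁻¹ S)`, with both
preimages open because `ι` and `ĵ` are continuous. Since `(n, φ) → (∞, φ)` in `Z∞ × Y`, the point
`ĵ[(φ, z)] = [((∞, φ), z)]` lies in the closure of `{ι φ}`, so an open set containing it also
contains `ι φ`.
-/

section WilliamsQuotient

variable {Y : Type*} [TopologicalSpace Y] (σ : Y ≃ₜ Y)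

lemma actZ_coe (n m : ℤ) (φ : Y) :
    actZ σ n ((m : WithTop ℤ), φ) = (((m + n : ℤ) : WithTop ℤ), φ) := by
  simp [actZ, WithTop.map_coe]

lemma quot_mk_coe_eq_iotaQ (m : ℤ) (φ : Y) (z : Circle) :
    Quot.mk (williams (actZ σ)) (((m : WithTop ℤ), φ), z) = iotaQ σ φ := by
  refine Quot.sound ⟨congrArg closure ?_, fun n hn => ?_⟩
  · ext p
    simp only [Set.mem_range, actZ_coe]
    constructor
    · rintro ⟨n, rfl⟩
      exact ⟨m + n, by rw [zero_add]⟩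
    · rintro ⟨n, rfl⟩
      exact ⟨n - m, by rw [add_sub_cancel, zero_add]⟩
  · simp only [actZ_coe, Prod.mk.injEq, WithTop.coe_eq_coe, add_eq_left] at hn
    simp [hn.1]

lemma continuous_iotaQ : Continuous (iotaQ σ) := by
  unfold iotaQ
  fun_prop

lemma iotaQ_specializes_quot_mk_top (φ : Y) (z : Circle) :
    iotaQ σ φ ⤳ Quot.mk (williams (actZ σ)) (((⊤ : WithTop ℤ), φ), z) := by
  have hcoe : Tendsto (fun n : ℤ => (n : WithTop ℤ)) atTop (𝓝 ⊤) := WithTop.tendsto_coe_atTop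
  have hlim : Tendsto (fun n : ℤ => Quot.mk (williams (actZ σ)) (((n : WithTop ℤ), φ), z))
      atTop (𝓝 (Quot.mk _ (((⊤ : WithTop ℤ), φ), z))) :=
    ((continuous_quot_mk.comp (f := fun t : WithTop ℤ => ((t, φ), z)) (by fun_prop)).tendsto
      ⊤).comp hcoe
  simp only [quot_mk_coe_eq_iotaQ] at hlim
  rw [specializes_iff_forall_open]
  intro s hs hmem
  obtain ⟨n, hn⟩ := (hlim.eventually (hs.mem_nhds hmem)).exists
  exact hn

variable {σ}
variable {j : Quot (williams (fun (n : ℤ) (y : Y) => sigmaPow σ n y)) → Quot (williams (actZ σ))}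

lemma continuous_of_quot_mk_top (hj : ∀ (φ : Y) (z : Circle),
      j (Quot.mk _ (φ, z)) = Quot.mk _ (((⊤ : WithTop ℤ), φ), z)) :
    Continuous j := by
  refine continuous_coinduced_dom.2 ?_
  have : j ∘ Quot.mk _ = fun p : Y × Circle => Quot.mk (williams (actZ σ)) ((⊤, p.1), p.2) :=
    funext fun p => hj p.1 p.2
  rw [this]
  exact continuous_quot_mk.comp (by fun_prop)

lemma range_iotaQ_union_range_eq_univ (hj : ∀ (φ : Y) (z : Circle),
      j (Quot.mk _ (φ, z)) = Quot.mk _ (((⊤ : WithTop ℤ), φ), z)) :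
    Set.range (iotaQ σ) ∪ Set.range j = Set.univ := by
  refine Set.eq_univ_of_forall fun q => ?_
  obtain ⟨⟨⟨t, φ⟩, z⟩, rfl⟩ := Quot.exists_rep q
  cases t with
  | top => exact Or.inr ⟨Quot.mk _ (φ, z), hj φ z⟩
  | coe m => exact Or.inl ⟨φ, (quot_mk_coe_eq_iotaQ σ m φ z).symm⟩

end WilliamsQuotient

theorem open_sets_of_Q_general {Y : Type*} [TopologicalSpace Y] (σ : Y ≃ₜ Y)
    (j : Quot (williams (fun (n : ℤ) (y : Y) => sigmaPow σ n y)) →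
      Quot (williams (actZ σ)))
    (hj : ∀ (φ : Y) (z : Circle),
      j (Quot.mk _ (φ, z)) = Quot.mk _ (((⊤ : WithTop ℤ), φ), z)) :
    ∀ S : Set (Quot (williams (actZ σ))), IsOpen S →
      ∃ (U : Set Y) (W : Set (Quot (williams (fun (n : ℤ) (y : Y) => sigmaPow σ n y)))),
        IsOpen U ∧ IsOpen W ∧ S = iotaQ σ '' U ∪ j '' W ∧ (W.Nonempty → U.Nonempty) := by
  intro S hS
  refine ⟨iotaQ σ ⁻¹' S, j ⁻¹' S, hS.preimage (continuous_iotaQ σ),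
    hS.preimage (continuous_of_quot_mk_top hj), ?_, ?_⟩
  · rw [Set.image_preimage_eq_inter_range, Set.image_preimage_eq_inter_range,
      ← Set.inter_union_distrib_left, range_iotaQ_union_range_eq_univ hj, Set.inter_univ]
  · rintro ⟨w, hw⟩
    obtain ⟨⟨φ, z⟩, rfl⟩ := Quot.exists_rep w
    rw [Set.mem_preimage, hj] at hw
    exact ⟨φ, (iotaQ_specializes_quot_mk_top σ φ z).mem_open hS hw⟩

/-- For Hausdorff `Y`: every open subset `S` of `Q` can be written as `S = ι(U) ∪ ĵ(W)` with
`U ⊆ Y` open, `W ⊆ R` open, and `U` nonempty whenever `W` is nonempty. -/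
theorem open_sets_of_Q {Y : Type*} [TopologicalSpace Y] [T2Space Y] (σ : Y ≃ₜ Y)
    (j : Quot (williams (fun (n : ℤ) (y : Y) => sigmaPow σ n y)) →
      Quot (williams (actZ σ)))
    (hj : ∀ (φ : Y) (z : Circle),
      j (Quot.mk _ (φ, z)) = Quot.mk _ (((⊤ : WithTop ℤ), φ), z)) :
    ∀ S : Set (Quot (williams (actZ σ))), IsOpen S →
      ∃ (U : Set Y) (W : Set (Quot (williams (fun (n : ℤ) (y : Y) => sigmaPow σ n y)))),
        IsOpen U ∧ IsOpen W ∧ S = iotaQ σ '' U ∪ j '' W ∧ (W.Nonempty → U.Nonempty) :=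
  open_sets_of_Q_general σ j hj
end

section
/- Suppose Y is a T₀ space. For quasi-orbits of the ℤ-action on Z∞ × Y: (a) for m, n ∈ ℤ and y, y' ∈ Y, O((m, y)) = O((n, y')) if and only if y = y'; (b) for m ∈ ℤ, O((m, y)) ≠ O((∞, y')) for all y, y' ∈ Y; (c) O((∞, y)) = O((∞, y')) if and only if the closures of the σ-orbits of y and y' in Y coincide, i.e., if and only if y and y' have the same quasi-orbit in Y for the action n·y = σⁿ(y). -/
open Filter Topology

/-! The orbit of `(m, y)` is `ℤ × {y}`, and `ℤ` is dense in `Z∞`, so its closure is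
`Z∞ × closure {y}`; the orbit of `(∞, y)` is `{∞} × σ^ℤ y`, with closure `{∞} × closure (σ^ℤ y)`.
A product of nonempty sets determines its factors, and in a T₀ space `closure {y}` determines `y`. -/

open Set

lemma dense_range_intCast_withTop : Dense (range ((↑) : ℤ → WithTop ℤ)) := by
  intro x
  induction x with
  | top =>
    rw [mem_closure_iff_nhds_basis nhds_top_basis]
    rintro a ha
    lift a to ℤ using ha.ne
    exact ⟨(a + 1 : ℤ), mem_range_self _, WithTop.coe_lt_coe.mpr (lt_add_one a)⟩
  | coe k => exact subset_closure (mem_range_self k)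

section

variable {Y : Type*} [TopologicalSpace Y] (σ : Y ≃ₜ Y)

lemma range_actZ_coe (m : ℤ) (y : Y) :
    (range fun n : ℤ => actZ σ n ((m : WithTop ℤ), y)) = range ((↑) : ℤ → WithTop ℤ) ×ˢ {y} := by
  ext ⟨a, b⟩
  simp only [actZ, mem_range, mem_prod, mem_singleton_iff, WithTop.coe_ne_top, if_false,
    WithTop.map_coe, Prod.mk.injEq]
  constructor
  · rintro ⟨n, rfl, rfl⟩
    exact ⟨⟨m + n, rfl⟩, rfl⟩
  · rintro ⟨⟨k, rfl⟩, rfl⟩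
    exact ⟨k - m, by simp, rfl⟩

lemma range_actZ_top (y : Y) :
    (range fun n : ℤ => actZ σ n ((⊤ : WithTop ℤ), y)) =
      ({⊤} : Set (WithTop ℤ)) ×ˢ range fun n : ℤ => sigmaPow σ n y := by
  ext ⟨a, b⟩
  simp only [actZ, mem_range, mem_prod, mem_singleton_iff, if_true, WithTop.map_top,
    Prod.mk.injEq]
  constructor
  · rintro ⟨n, rfl, rfl⟩
    exact ⟨rfl, n, rfl⟩
  · rintro ⟨rfl, n, rfl⟩
    exact ⟨n, rfl, rfl⟩

lemma closure_range_actZ_coe (m : ℤ) (y : Y) :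
    closure (range fun n : ℤ => actZ σ n ((m : WithTop ℤ), y)) = univ ×ˢ closure {y} := by
  rw [range_actZ_coe, closure_prod_eq, dense_range_intCast_withTop.closure_eq]

lemma closure_range_actZ_top (y : Y) :
    closure (range fun n : ℤ => actZ σ n ((⊤ : WithTop ℤ), y)) =
      ({⊤} : Set (WithTop ℤ)) ×ˢ closure (range fun n : ℤ => sigmaPow σ n y) := by
  rw [range_actZ_top, closure_prod_eq, closure_singleton]

lemma self_mem_closure_range_sigmaPow (y : Y) :
    y ∈ closure (range fun n : ℤ => sigmaPow σ n y) :=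
  subset_closure ⟨0, rfl⟩

end

/-- For a T₀ space `Y`, quasi-orbits of the `ℤ`-action on `Z∞ × Y`:
(a) `O((m, y)) = O((n, y'))` iff `y = y'`;
(b) `O((m, y)) ≠ O((∞, y'))`;
(c) `O((∞, y)) = O((∞, y'))` iff the closures of the `σ`-orbits of `y` and `y'` coincide. -/
theorem quasiOrbits_actZ {Y : Type*} [TopologicalSpace Y] [T0Space Y] (σ : Y ≃ₜ Y) :
    (∀ (m m' : ℤ) (y y' : Y),
      closure (Set.range fun n : ℤ => actZ σ n ((m : WithTop ℤ), y)) =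
          closure (Set.range fun n : ℤ => actZ σ n ((m' : WithTop ℤ), y')) ↔ y = y') ∧
    (∀ (m : ℤ) (y y' : Y),
      closure (Set.range fun n : ℤ => actZ σ n ((m : WithTop ℤ), y)) ≠
        closure (Set.range fun n : ℤ => actZ σ n ((⊤ : WithTop ℤ), y'))) ∧
    (∀ y y' : Y,
      closure (Set.range fun n : ℤ => actZ σ n ((⊤ : WithTop ℤ), y)) =
          closure (Set.range fun n : ℤ => actZ σ n ((⊤ : WithTop ℤ), y')) ↔
        closure (Set.range fun n : ℤ => sigmaPow σ n y) =
          closure (Set.range fun n : ℤ => sigmaPow σ n y')) := by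
  refine ⟨fun m m' y y' => ?_, fun m y y' h => ?_, fun y y' => ?_⟩
  · rw [closure_range_actZ_coe, closure_range_actZ_coe,
      prod_eq_prod_iff_of_nonempty (univ_nonempty.prod (singleton_nonempty y).closure),
      ← inseparable_iff_closure_eq, inseparable_iff_eq]
    exact ⟨fun h => h.2, fun h => ⟨rfl, h⟩⟩
  · rw [closure_range_actZ_coe, closure_range_actZ_top, prod_eq_prod_iff_of_nonempty
      (univ_nonempty.prod (singleton_nonempty y).closure)] at h
    exact WithTop.coe_ne_top (h.1.symm ▸ mem_univ ((m : ℤ) : WithTop ℤ))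
  · rw [closure_range_actZ_top, closure_range_actZ_top, prod_eq_prod_iff_of_nonempty
      ((singleton_nonempty ⊤).prod ⟨y, self_mem_closure_range_sigmaPow σ y⟩)]
    exact ⟨fun h => h.2, fun h => ⟨rfl, h⟩⟩
end
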